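/- arXiv:math/0609490 — 5 statements merged into one kernel-verified Lean document; each statement's English description precedes it below -/
import Mathlib

section
/- Let n ≥ 1 be odd. Then p_n(Z) - 2 = q_1(Z) · ∏_{d | n, d ≠ 1} q_d(Z)², where p_n is the trace polynomial family (p_1 = Z, p_2 = Z² - 2, p_n = Z·p_{n-1} - p_{n-2}), q_1(Z) = Z - 2, and for d ≥ 3 the polynomial q_d is determined by g_d(X) = X^{φ(d)/2} q_d(X + 1/X) for the d-th cyclotomic polynomial g_d. -/
open Polynomial Finset

/-! Write `Z = x + x⁻¹`, which every complex `Z` is. Then `p_n(Z) - 2 = x⁻ⁿ (xⁿ - 1)²`, and for odd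
`n` we have `xⁿ - 1 = (x - 1) ∏_{d ∣ n, d ≠ 1} g_d(x)` with `g_d(x) = x^{φ(d)/2} q_d(Z)` and
`∑ φ(d)/2 = (n - 1)/2`. The powers of `x` cancel, leaving `x⁻¹ (x - 1)² = Z - 2 = q_1(Z)`. -/

noncomputable def tracePoly : ℕ → Polynomial ℂ
  | 0 => 1
  | 1 => X
  | 2 => X ^ 2 - 2
  | (n + 3) => X * tracePoly (n + 2) - tracePoly (n + 1)

lemma tracePoly_eval_add_inv {n : ℕ} (hn : n ≠ 0) {x : ℂ} (hx : x ≠ 0) :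
    (tracePoly n).eval (x + x⁻¹) = x ^ n + x⁻¹ ^ n := by
  induction n using tracePoly.induct with
  | case1 => contradiction
  | case2 => simp [tracePoly]
  | case3 => simp [tracePoly]; field_simp; ring
  | case4 n ih₂ ih₁ =>
    rw [tracePoly, eval_sub, eval_mul, eval_X, ih₁ (by omega), ih₂ (by omega)]
    simp only [Nat.succ_eq_add_one, inv_pow]
    field_simp
    ring

lemma exists_add_inv_eq {K : Type*} [Field K] [IsAlgClosed K] (z : K) :
    ∃ x ≠ 0, x + x⁻¹ = z := by
  have hdeg : (X ^ 2 - C z * X + 1 : K[X]).degree = 2 := by compute_degree!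
  obtain ⟨x, hx⟩ := IsAlgClosed.exists_root _ (hdeg ▸ two_ne_zero)
  have hx : x ^ 2 - z * x + 1 = 0 := by simpa using hx
  have hx0 : x ≠ 0 := by rintro rfl; simp at hx
  refine ⟨x, hx0, ?_⟩
  field_simp
  linear_combination hx

lemma three_le_of_mem_divisors_erase_one {n d : ℕ} (hn : Odd n)
    (hd : d ∈ n.divisors.erase 1) : 3 ≤ d := by
  obtain ⟨hd1, hdn, -⟩ := by simpa using hd
  obtain ⟨k, rfl⟩ := hn.of_dvd_nat hdn
  omega

lemma two_mul_sum_totient_div_two {n : ℕ} (hn : Odd n) :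
    2 * ∑ d ∈ n.divisors.erase 1, d.totient / 2 = n - 1 := by
  have hsum := sum_erase_add n.divisors Nat.totient (Nat.one_mem_divisors.mpr hn.pos.ne')
  rw [Nat.totient_one, Nat.sum_totient] at hsum
  calc 2 * ∑ d ∈ n.divisors.erase 1, d.totient / 2 = ∑ d ∈ n.divisors.erase 1, d.totient := by
        rw [mul_sum]
        refine sum_congr rfl fun d hd => Nat.two_mul_div_two_of_even (Nat.totient_even ?_)
        exact three_le_of_mem_divisors_erase_one hn hd
    _ = n - 1 := by omega

theorem stmt9_general (q : ℕ → Polynomial ℂ) (hq1 : q 1 = X - 2)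
    (hq : ∀ d : ℕ, 3 ≤ d → ∀ x : ℂ, x ≠ 0 →
      (Polynomial.cyclotomic d ℂ).eval x = x ^ (Nat.totient d / 2) * (q d).eval (x + x⁻¹))
    (n : ℕ) (hodd : Odd n) :
    tracePoly n - 2 = q 1 * ∏ d ∈ n.divisors.erase 1, (q d) ^ 2 := by
  refine Polynomial.funext fun z => ?_
  obtain ⟨x, hx, rfl⟩ := exists_add_inv_eq z
  set S := ∑ d ∈ n.divisors.erase 1, d.totient / 2
  set P := ∏ d ∈ n.divisors.erase 1, (q d).eval (x + x⁻¹)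
  have hn : n = 2 * S + 1 := by have := two_mul_sum_totient_div_two hodd; have := hodd.pos; omega
  have hcyc : x ^ n - 1 = (x - 1) * (x ^ S * P) := by
    have hprod := congr_arg (eval x) (prod_cyclotomic_eq_geom_sum hodd.pos ℂ)
    rw [eval_prod, prod_congr rfl fun d hd => hq d (three_le_of_mem_divisors_erase_one hodd hd) x hx,
      prod_mul_distrib, prod_pow_eq_pow_sum, eval_finsetSum] at hprod
    simp only [eval_pow, eval_X] at hprod
    rw [← mul_geom_sum, ← hprod]
  simp only [eval_sub, eval_mul, eval_prod, eval_pow, eval_X, eval_ofNat, hq1,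
    tracePoly_eval_add_inv hodd.pos.ne' hx, prod_pow]
  calc x ^ n + x⁻¹ ^ n - 2 = x⁻¹ ^ n * (x ^ n - 1) ^ 2 := by rw [inv_pow]; field_simp; ring
    _ = x⁻¹ ^ n * ((x - 1) * (x ^ S * P)) ^ 2 := by rw [hcyc]
    _ = (x + x⁻¹ - 2) * P ^ 2 := by rw [hn, inv_pow]; field_simp; ring

theorem stmt9 (q : ℕ → Polynomial ℂ) (hq1 : q 1 = X - 2) (hq2 : q 2 = X + 2)
    (hq : ∀ d : ℕ, 3 ≤ d → ∀ x : ℂ, x ≠ 0 →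
      (Polynomial.cyclotomic d ℂ).eval x = x ^ (Nat.totient d / 2) * (q d).eval (x + x⁻¹))
    (n : ℕ) (hn : 1 ≤ n) (hodd : Odd n) :
    tracePoly n - 2 = q 1 * ∏ d ∈ n.divisors.erase 1, (q d) ^ 2 :=
  stmt9_general q hq1 hq n hodd
end

section
/- The complex roots of the polynomial p_n(X) - 2 are exactly the numbers of the form a + a⁻¹ where a is an n-th root of unity; equivalently, the roots are exactly the possible values of tr(ρ(x)) over representations ρ : ℤ/nℤ → SL(2,ℂ), where x is a generator. -/
open Polynomial

theorem IsAlgClosed.exists_ne_zero_eq_add_inv {K : Type*} [Field K] [IsAlgClosed K] (z : K) :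
    ∃ a : K, a ≠ 0 ∧ z = a + a⁻¹ := by
  have hdeg : (X ^ 2 - C z * X + 1 : K[X]).degree = 2 := by compute_degree!
  obtain ⟨a, ha⟩ := IsAlgClosed.exists_root _ (hdeg ▸ two_ne_zero)
  simp only [IsRoot, eval_add, eval_sub, eval_mul, eval_pow, eval_X, eval_C, eval_one] at ha
  have ha0 : a ≠ 0 := by rintro rfl; simp at ha
  refine ⟨a, ha0, ?_⟩
  field_simp
  linear_combination -ha

theorem add_inv_eq_two_iff {K : Type*} [Field K] {b : K} (hb : b ≠ 0) : b + b⁻¹ = 2 ↔ b = 1 := by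
  refine ⟨fun h ↦ ?_, by rintro rfl; norm_num⟩
  have hsq : (b - 1) ^ 2 = 0 := by
    field_simp at h
    linear_combination h
  exact sub_eq_zero.mp (pow_eq_zero_iff two_ne_zero |>.mp hsq)

-- Stated from index 1 on: `tracePoly 0 = 1`, not the trace `2` of the identity.
theorem tracePoly_eval_add_inv_s11 {a : ℂ} (ha : a ≠ 0) :
    ∀ n : ℕ, (tracePoly (n + 1)).eval (a + a⁻¹) = a ^ (n + 1) + a⁻¹ ^ (n + 1)
  | 0 => by simp [tracePoly]
  | 1 => by
      simp only [tracePoly, eval_sub, eval_pow, eval_X, eval_ofNat]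
      linear_combination 2 * mul_inv_cancel₀ ha
  | n + 2 => by
      simp only [tracePoly, eval_sub, eval_mul, eval_X, tracePoly_eval_add_inv_s11 ha n,
        tracePoly_eval_add_inv_s11 ha (n + 1)]
      linear_combination (a ^ (n + 1) + a⁻¹ ^ (n + 1)) * mul_inv_cancel₀ ha

theorem tracePoly_eval_add_inv_sub_two_eq_zero_iff {n : ℕ} (hn : 1 ≤ n) {a : ℂ} (ha : a ≠ 0) :
    (tracePoly n).eval (a + a⁻¹) - 2 = 0 ↔ a ^ n = 1 := by
  obtain ⟨m, rfl⟩ := Nat.exists_eq_add_of_le' hn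
  rw [tracePoly_eval_add_inv_s11 ha, sub_eq_zero, inv_pow, add_inv_eq_two_iff (pow_ne_zero _ ha)]

theorem stmt11 (n : ℕ) (hn : 1 ≤ n) (z : ℂ) :
    (tracePoly n).eval z - 2 = 0 ↔ ∃ a : ℂ, a ^ n = 1 ∧ z = a + a⁻¹ := by
  constructor
  · obtain ⟨a, ha, rfl⟩ := IsAlgClosed.exists_ne_zero_eq_add_inv z
    exact fun h ↦ ⟨a, (tracePoly_eval_add_inv_sub_two_eq_zero_iff hn ha).mp h, rfl⟩
  · rintro ⟨a, han, rfl⟩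
    have ha : a ≠ 0 := (IsUnit.of_pow_eq_one han (by omega)).ne_zero
    exact (tracePoly_eval_add_inv_sub_two_eq_zero_iff hn ha).mpr han
end

section
/- For every integer s ≥ 1: Σ_{i=0}^{s} p_i(Z) = ∏_{d | 2s+1, d ≠ 1} q_d(Z), where p_0 = 1, p_1 = Z, p_2 = Z² - 2, p_n = Z·p_{n-1} - p_{n-2}, and q_d is determined by g_d(X) = X^{φ(d)/2} q_d(X + 1/X) for d ≥ 3 (g_d the d-th cyclotomic polynomial). -/
open Polynomial

theorem trace_eval (x : ℂ) (hx : x ≠ 0) :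
    ∀ n : ℕ, (tracePoly (n + 1)).eval (x + x⁻¹) = x ^ (n + 1) + (x⁻¹) ^ (n + 1)
  | 0 => by simp [tracePoly]
  | 1 => by
      have key : x * x⁻¹ = 1 := mul_inv_cancel₀ hx
      simp only [tracePoly, eval_sub, eval_pow, eval_X, eval_ofNat]
      ring_nf
      linear_combination (2 : ℂ) * key
  | (n + 2) => by
      have h2 := trace_eval x hx (n + 1)
      have h1 := trace_eval x hx n
      have key : x * x⁻¹ = 1 := mul_inv_cancel₀ hx
      show (tracePoly (n + 3)).eval (x + x⁻¹) = _
      rw [tracePoly]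
      simp only [eval_sub, eval_mul, eval_X, h1, h2]
      ring_nf
      linear_combination (x ^ (n + 1) + (x⁻¹) ^ (n + 1)) * key

theorem sum_eval (x : ℂ) (hx : x ≠ 0) (s : ℕ) :
    (x - 1) * x ^ s * (∑ i ∈ Finset.range (s + 1), tracePoly i).eval (x + x⁻¹)
      = x ^ (2 * s + 1) - 1 := by
  induction s with
  | zero => simp [tracePoly]
  | succ s ih =>
      rw [Finset.sum_range_succ, eval_add, trace_eval x hx s]
      have key : x ^ (s + 1) * (x⁻¹) ^ (s + 1) = 1 := by
        rw [← mul_pow, mul_inv_cancel₀ hx, one_pow]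
      linear_combination x * ih + (x - 1) * key

theorem stmt12 (q : ℕ → Polynomial ℂ) (hq1 : q 1 = X - 2) (hq2 : q 2 = X + 2)
    (hq : ∀ d : ℕ, 3 ≤ d → ∀ x : ℂ, x ≠ 0 →
      (Polynomial.cyclotomic d ℂ).eval x = x ^ (Nat.totient d / 2) * (q d).eval (x + x⁻¹))
    (s : ℕ) (hs : 1 ≤ s) :
    (∑ i ∈ Finset.range (s + 1), tracePoly i) =
      ∏ d ∈ (2 * s + 1).divisors.erase 1, q d := by
  set n := 2 * s + 1 with hn
  have hn0 : 0 < n := by omega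
  have h1mem : (1 : ℕ) ∈ n.divisors := Nat.one_mem_divisors.mpr (by omega)
  -- facts about the erased divisor set
  have hd3 : ∀ d ∈ n.divisors.erase 1, 3 ≤ d := by
    intro d hd
    have hne1 : d ≠ 1 := (Finset.mem_erase.mp hd).1
    have hmem := (Finset.mem_erase.mp hd).2
    have hdvd : d ∣ n := (Nat.mem_divisors.mp hmem).1
    have hd0 : d ≠ 0 := by
      rintro rfl
      exact absurd (Nat.eq_zero_of_zero_dvd hdvd) (by omega)
    have hd2 : d ≠ 2 := by
      rintro rfl
      obtain ⟨k, hk⟩ := hdvd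
      omega
    omega
  -- totient sum over erased divisors
  have hsum : ∑ d ∈ n.divisors.erase 1, d.totient / 2 = s := by
    have htot : ∑ d ∈ n.divisors, d.totient = n := Nat.sum_totient n
    have hsplit : Nat.totient 1 + ∑ d ∈ n.divisors.erase 1, d.totient
        = ∑ d ∈ n.divisors, d.totient := Finset.add_sum_erase _ _ h1mem
    have herase : ∑ d ∈ n.divisors.erase 1, d.totient = 2 * s := by
      rw [Nat.totient_one] at hsplit; omega
    have heven : ∀ d ∈ n.divisors.erase 1, d.totient / 2 * 2 = d.totient := by
      intro d hd
      exact Nat.div_mul_cancel (Nat.totient_even (by have := hd3 d hd; omega)).two_dvd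
    have : (∑ d ∈ n.divisors.erase 1, d.totient / 2) * 2
        = ∑ d ∈ n.divisors.erase 1, d.totient := by
      rw [Finset.sum_mul]
      exact Finset.sum_congr rfl heven
    omega
  -- evaluation identity for the RHS
  have prod_eval : ∀ x : ℂ, x ≠ 0 →
      (x - 1) * x ^ s * (∏ d ∈ n.divisors.erase 1, q d).eval (x + x⁻¹)
        = x ^ n - 1 := by
    intro x hx
    have hcyc : (∏ d ∈ n.divisors, Polynomial.cyclotomic d ℂ).eval x = x ^ n - 1 := by
      rw [Polynomial.prod_cyclotomic_eq_X_pow_sub_one hn0]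
      simp
    have hsplit : Polynomial.cyclotomic 1 ℂ * ∏ d ∈ n.divisors.erase 1, Polynomial.cyclotomic d ℂ
        = ∏ d ∈ n.divisors, Polynomial.cyclotomic d ℂ := Finset.mul_prod_erase n.divisors (fun d => Polynomial.cyclotomic d ℂ) h1mem
    have hprodq : ∏ d ∈ n.divisors.erase 1, (Polynomial.cyclotomic d ℂ).eval x
        = x ^ s * ∏ d ∈ n.divisors.erase 1, (q d).eval (x + x⁻¹) := by
      rw [Finset.prod_congr rfl (fun d hd => hq d (hd3 d hd) x hx),
        Finset.prod_mul_distrib, Finset.prod_pow_eq_pow_sum, hsum]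
    calc (x - 1) * x ^ s * (∏ d ∈ n.divisors.erase 1, q d).eval (x + x⁻¹)
        = (x - 1) * (x ^ s * ∏ d ∈ n.divisors.erase 1, (q d).eval (x + x⁻¹)) := by
          rw [eval_prod]; ring
      _ = (x - 1) * ∏ d ∈ n.divisors.erase 1, (Polynomial.cyclotomic d ℂ).eval x := by
          rw [hprodq]
      _ = (Polynomial.cyclotomic 1 ℂ * ∏ d ∈ n.divisors.erase 1,
            Polynomial.cyclotomic d ℂ).eval x := by
          rw [eval_mul, eval_prod, Polynomial.cyclotomic_one, eval_sub, eval_X, eval_one]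
      _ = x ^ n - 1 := by rw [hsplit, hcyc]
  -- conclude via agreement on an infinite set
  apply Polynomial.eq_of_infinite_eval_eq
  apply Set.infinite_of_injective_forall_mem
    (f := fun m : ℕ => ((m : ℂ) + 2) + ((m : ℂ) + 2)⁻¹)
  · intro a b hab
    have ha : ((a : ℂ) + 2) ≠ 0 := by
      intro h
      have h' : (((a + 2 : ℕ)) : ℂ) = 0 := by push_cast; linear_combination h
      rw [Nat.cast_eq_zero] at h'; omega
    have hb : ((b : ℂ) + 2) ≠ 0 := by
      intro h
      have h' : (((b + 2 : ℕ)) : ℂ) = 0 := by push_cast; linear_combination h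
      rw [Nat.cast_eq_zero] at h'; omega
    have hprod : ((a : ℂ) + 2) * ((b : ℂ) + 2) ≠ 1 := by
      intro h
      have h' : ((((a + 2) * (b + 2) : ℕ)) : ℂ) = ((1 : ℕ) : ℂ) := by
        push_cast; linear_combination h
      have h'' := Nat.cast_inj (R := ℂ) |>.mp h'
      nlinarith [h'']
    have key : (((a : ℂ) + 2) - ((b : ℂ) + 2)) * (((a : ℂ) + 2) * ((b : ℂ) + 2) - 1) = 0 := by
      field_simp at hab
      linear_combination hab
    rcases mul_eq_zero.mp key with h | h
    · have h' : ((a : ℕ) : ℂ) = ((b : ℕ) : ℂ) := by push_cast; linear_combination h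
      exact Nat.cast_inj (R := ℂ) |>.mp h'
    · exact absurd (by linear_combination h) hprod
  · intro m
    set x : ℂ := (m : ℂ) + 2 with hxdef
    have hx : x ≠ 0 := by
      intro h
      have h' : (((m + 2 : ℕ)) : ℂ) = 0 := by push_cast; linear_combination h
      rw [Nat.cast_eq_zero] at h'; omega
    have hx1 : x ≠ 1 := by
      intro h
      have h' : (((m + 2 : ℕ)) : ℂ) = ((1 : ℕ) : ℂ) := by push_cast; linear_combination h
      have := Nat.cast_inj (R := ℂ) |>.mp h'
      omega
    have hmul : (x - 1) * x ^ s ≠ 0 :=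
      mul_ne_zero (sub_ne_zero.mpr hx1) (pow_ne_zero _ hx)
    have h1 := sum_eval x hx s
    have h2 := prod_eval x hx
    show _ ∈ {y : ℂ | _}
    simp only [Set.mem_setOf_eq]
    exact mul_left_cancel₀ hmul (h1.trans h2.symm)
end

section
/- For every integer s ≥ 1: Σ_{i=0}^{s} (-1)ⁱ p_{s-i}(Z) = ∏_{d | 2s+1, d ≠ 1} q_d*(Z), where p_n is the trace polynomial family, q_d is determined by the cyclotomic polynomial relation g_d(X) = X^{φ(d)/2} q_d(X + 1/X), and * is the involution g*(T) = (-1)^{deg g} g(-T). -/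
/-!
Substitute `X = z + z⁻¹` with `z ≠ 0`; every complex number is of this form. After
multiplication by `z ^ s` both sides become the geometric sum `∑_{k ≤ 2s} (-z)^k`. On the left
this follows from `p_n(z + z⁻¹) = z^n + z^{-n}` for `n ≥ 1`. On the right, `deg q_d = φ(d)/2` gives
`q_d*(z + z⁻¹) z^{φ(d)/2} = g_d(-z)`, and `∏_{d ∣ 2s+1, d ≠ 1} g_d = ∑_{k ≤ 2s} X^k`.
-/

open Polynomial

/-- The involution `g* (T) = (-1)^(deg g) * g (-T)`. -/
noncomputable def starPoly (g : Polynomial ℂ) : Polynomial ℂ :=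
  (-1 : Polynomial ℂ) ^ g.natDegree * g.comp (-X)

open Finset

section AlgClosed

variable {K : Type*} [Field K] [IsAlgClosed K]

theorem exists_ne_zero_add_inv_eq (w : K) : ∃ z ≠ 0, z + z⁻¹ = w := by
  obtain ⟨z, hz⟩ := IsAlgClosed.exists_root (X ^ 2 - C w * X + 1 : K[X])
    (by rw [show (X ^ 2 - C w * X + 1 : K[X]).degree = 2 by compute_degree!]; decide)
  simp only [IsRoot, eval_add, eval_sub, eval_pow, eval_mul, eval_C, eval_X, eval_one] at hz
  have hz0 : z ≠ 0 := by rintro rfl; simp at hz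
  refine ⟨z, hz0, ?_⟩
  field_simp
  linear_combination hz

namespace Polynomial

/-- Each factor `X - r` of `q` turns into `X ^ 2 - r X + 1 = X (X + X⁻¹ - r)`. -/
theorem exists_natDegree_eq_two_mul_eval_eq_pow_mul_eval_add_inv (q : K[X]) :
    ∃ R : K[X], R.natDegree = 2 * q.natDegree ∧
      ∀ x ≠ 0, R.eval x = x ^ q.natDegree * q.eval (x + x⁻¹) := by
  have hmonic (r : K) : (X ^ 2 - C r * X + 1 : K[X]).Monic := by monicity!
  have hdeg (r : K) : (X ^ 2 - C r * X + 1 : K[X]).natDegree = 2 := by compute_degree!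
  have hcard : q.roots.card = q.natDegree := IsAlgClosed.card_roots_eq_natDegree
  refine ⟨C q.leadingCoeff * (q.roots.map fun r => X ^ 2 - C r * X + 1).prod, ?_, fun x hx => ?_⟩
  · rcases eq_or_ne q 0 with rfl | hq
    · simp
    rw [natDegree_C_mul (leadingCoeff_ne_zero.2 hq), natDegree_multiset_prod_of_monic _
      (fun f hf => by obtain ⟨r, -, rfl⟩ := Multiset.mem_map.1 hf; exact hmonic r),
      Multiset.map_map, Function.comp_def]
    simp only [hdeg, Multiset.map_const', Multiset.sum_replicate, smul_eq_mul, hcard]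
    ring
  · have hfactor (r : K) : x ^ 2 - r * x + 1 = x * (x + x⁻¹ - r) := by field_simp; ring
    conv_rhs => rw [← hcard]; arg 2; rw [← C_leadingCoeff_mul_prod_multiset_X_sub_C hcard]
    simp only [eval_mul, eval_C, eval_multiset_prod, Multiset.map_map, Function.comp_def,
      eval_add, eval_sub, eval_pow, eval_X, eval_one, hfactor, Multiset.prod_map_mul,
      Multiset.map_const', Multiset.prod_replicate]
    ring

theorem natDegree_eq_add_of_eval_eq_pow_mul_eval_add_inv {P q : K[X]} (hP : P ≠ 0) {m : ℕ}
    (h : ∀ x ≠ 0, P.eval x = x ^ m * q.eval (x + x⁻¹)) : P.natDegree = m + q.natDegree := by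
  obtain ⟨R, hRdeg, hR⟩ := exists_natDegree_eq_two_mul_eval_eq_pow_mul_eval_add_inv q
  have hPR : X ^ q.natDegree * P = X ^ m * R := by
    refine eq_of_infinite_eval_eq _ _ ((Set.finite_singleton 0).infinite_compl.mono fun x hx => ?_)
    simp only [Set.mem_compl_iff, Set.mem_singleton_iff] at hx
    simp only [Set.mem_ofPred_eq, eval_mul, eval_pow, eval_X, h x hx, hR x hx]
    ring
  have hR0 : R ≠ 0 := by
    rintro rfl
    simp [hP] at hPR
  have hdeg := congrArg natDegree hPR
  rw [natDegree_X_pow_mul _ hP, natDegree_X_pow_mul _ hR0] at hdeg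
  omega

end Polynomial

end AlgClosed

theorem tracePoly_succ_eq_dickson : ∀ n : ℕ, tracePoly (n + 1) = dickson 1 (1 : ℂ) (n + 1)
  | 0 => rfl
  | 1 => by norm_num [tracePoly, sq]
  | n + 2 => by
    rw [dickson_add_two, ← tracePoly_succ_eq_dickson n, ← tracePoly_succ_eq_dickson (n + 1)]
    simp [tracePoly]

theorem eval_add_inv_tracePoly_succ {z : ℂ} (hz : z ≠ 0) (n : ℕ) :
    (tracePoly (n + 1)).eval (z + z⁻¹) = z ^ (n + 1) + z⁻¹ ^ (n + 1) := by
  rw [tracePoly_succ_eq_dickson, dickson_one_one_eval_add_inv _ _ (mul_inv_cancel₀ hz)]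

theorem eval_add_inv_alternating_sum_tracePoly_mul_pow {z : ℂ} (hz : z ≠ 0) (s : ℕ) :
    (∑ i ∈ range (s + 1), (-1 : ℂ[X]) ^ i * tracePoly (s - i)).eval (z + z⁻¹) * z ^ s =
      ∑ k ∈ range (2 * s + 1), (-z) ^ k := by
  induction s with
  | zero => simp [tracePoly]
  | succ s ih =>
    have hrec : ∑ i ∈ range (s + 1 + 1), (-1 : ℂ[X]) ^ i * tracePoly (s + 1 - i) =
        -∑ i ∈ range (s + 1), (-1 : ℂ[X]) ^ i * tracePoly (s - i) + tracePoly (s + 1) := by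
      simp [sum_range_succ' _ (s + 1), pow_succ, sum_neg_distrib]
    have hgeom : ∑ k ∈ range (2 * (s + 1) + 1), (-z) ^ k =
        -z * ∑ k ∈ range (2 * s + 1), (-z) ^ k + z ^ (2 * s + 2) + 1 := by
      rw [show 2 * (s + 1) + 1 = 2 * s + 1 + 1 + 1 by omega, sum_range_succ', sum_range_succ,
        mul_sum, Even.neg_pow ⟨s + 1, by omega⟩]
      simp only [pow_succ', pow_zero]
    rw [hrec, hgeom, ← ih, eval_add, eval_neg, eval_add_inv_tracePoly_succ hz, inv_pow]
    field_simp
    ring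

theorem natDegree_eq_totient_div_two_of_cyclotomic_eval {q : ℂ[X]} {d : ℕ} (hd : 3 ≤ d)
    (h : ∀ x : ℂ, x ≠ 0 → (cyclotomic d ℂ).eval x = x ^ (d.totient / 2) * q.eval (x + x⁻¹)) :
    q.natDegree = d.totient / 2 := by
  have hdeg := natDegree_eq_add_of_eval_eq_pow_mul_eval_add_inv (cyclotomic_ne_zero d ℂ) h
  rw [natDegree_cyclotomic] at hdeg
  have := Nat.two_mul_div_two_of_even (Nat.totient_even (by omega : 2 < d))
  omega

theorem eval_add_inv_starPoly_mul_pow {q : ℂ[X]} {d : ℕ} (hd : 3 ≤ d)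
    (h : ∀ x : ℂ, x ≠ 0 → (cyclotomic d ℂ).eval x = x ^ (d.totient / 2) * q.eval (x + x⁻¹))
    {z : ℂ} (hz : z ≠ 0) :
    (starPoly q).eval (z + z⁻¹) * z ^ (d.totient / 2) = (cyclotomic d ℂ).eval (-z) := by
  rw [h (-z) (neg_ne_zero.2 hz), inv_neg, starPoly,
    natDegree_eq_totient_div_two_of_cyclotomic_eval hd h]
  simp only [eval_mul, eval_pow, eval_neg, eval_one, eval_comp, eval_X, neg_pow z, neg_add]
  ring

theorem three_le_of_mem_divisors_erase_one_s14 {s d : ℕ} (hd : d ∈ (2 * s + 1).divisors.erase 1) :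
    3 ≤ d := by
  obtain ⟨hd1, hdvd⟩ : d ≠ 1 ∧ d ∣ 2 * s + 1 := by simpa using hd
  have : d ≠ 2 := by rintro rfl; omega
  have := Nat.pos_of_dvd_of_pos hdvd (by omega)
  omega

theorem sum_divisors_erase_one_totient_div_two (s : ℕ) :
    ∑ d ∈ (2 * s + 1).divisors.erase 1, d.totient / 2 = s := by
  have htot := Nat.sum_totient (2 * s + 1)
  rw [← add_sum_erase _ _ (Nat.one_mem_divisors.2 (by omega)), Nat.totient_one] at htot
  have htwice : ∑ d ∈ (2 * s + 1).divisors.erase 1, 2 * (d.totient / 2) =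
      ∑ d ∈ (2 * s + 1).divisors.erase 1, d.totient :=
    sum_congr rfl fun d hd => Nat.two_mul_div_two_of_even
      (Nat.totient_even (three_le_of_mem_divisors_erase_one_s14 hd))
  rw [← mul_sum] at htwice
  omega

theorem eval_add_inv_prod_starPoly_mul_pow (q : ℕ → ℂ[X])
    (hq : ∀ d : ℕ, 3 ≤ d → ∀ x : ℂ, x ≠ 0 →
      (cyclotomic d ℂ).eval x = x ^ (d.totient / 2) * (q d).eval (x + x⁻¹))
    {z : ℂ} (hz : z ≠ 0) (s : ℕ) :
    (∏ d ∈ (2 * s + 1).divisors.erase 1, starPoly (q d)).eval (z + z⁻¹) * z ^ s =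
      ∑ k ∈ range (2 * s + 1), (-z) ^ k := by
  have hpow : z ^ s = ∏ d ∈ (2 * s + 1).divisors.erase 1, z ^ (d.totient / 2) := by
    rw [prod_pow_eq_pow_sum, sum_divisors_erase_one_totient_div_two]
  rw [hpow, eval_prod, ← prod_mul_distrib,
    prod_congr rfl fun d hd => eval_add_inv_starPoly_mul_pow
      (three_le_of_mem_divisors_erase_one_s14 hd) (hq d (three_le_of_mem_divisors_erase_one_s14 hd)) hz,
    ← eval_prod, prod_cyclotomic_eq_geom_sum (by omega)]
  simp [eval_finsetSum]

theorem stmt14_general (q : ℕ → Polynomial ℂ)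
    (hq : ∀ d : ℕ, 3 ≤ d → ∀ x : ℂ, x ≠ 0 →
      (Polynomial.cyclotomic d ℂ).eval x = x ^ (Nat.totient d / 2) * (q d).eval (x + x⁻¹))
    (s : ℕ) :
    (∑ i ∈ Finset.range (s + 1), (-1 : Polynomial ℂ) ^ i * tracePoly (s - i)) =
      ∏ d ∈ (2 * s + 1).divisors.erase 1, starPoly (q d) := by
  refine Polynomial.funext fun w => ?_
  obtain ⟨z, hz, rfl⟩ := exists_ne_zero_add_inv_eq w
  refine mul_right_cancel₀ (pow_ne_zero s hz) ?_
  rw [eval_add_inv_alternating_sum_tracePoly_mul_pow hz,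
    eval_add_inv_prod_starPoly_mul_pow q hq hz]

theorem stmt14 (q : ℕ → Polynomial ℂ) (hq1 : q 1 = X - 2) (hq2 : q 2 = X + 2)
    (hq : ∀ d : ℕ, 3 ≤ d → ∀ x : ℂ, x ≠ 0 →
      (Polynomial.cyclotomic d ℂ).eval x = x ^ (Nat.totient d / 2) * (q d).eval (x + x⁻¹))
    (s : ℕ) (hs : 1 ≤ s) :
    (∑ i ∈ Finset.range (s + 1), (-1 : Polynomial ℂ) ^ i * tracePoly (s - i)) =
      ∏ d ∈ (2 * s + 1).divisors.erase 1, starPoly (q d) :=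
  stmt14_general q hq s
end

section
/- For every integer s ≥ 1: p_s(Z) + Σ_{i=1}^{s} (-1)ⁱ β_i(Z) p_{s-i}(Z) = 0, where β_k(Z) = Z if k is odd and β_k(Z) = 2 if k is even, and p_n is the trace polynomial family with p_0 = 1, p_1 = Z, p_2 = Z² - 2, p_n = Z·p_{n-1} - p_{n-2}. -/
open Polynomial

noncomputable def beta (k : ℕ) : Polynomial ℂ := if Odd k then X else 2

lemma stmt15_aux : ∀ s : ℕ, 1 ≤ s →
    tracePoly s +
      ∑ i ∈ Finset.Icc 1 s, (-1 : Polynomial ℂ) ^ i * beta i * tracePoly (s - i) = 0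
  | 1, _ => by
    simp [tracePoly, beta]
  | 2, _ => by
    rw [show Finset.Icc 1 2 = {1, 2} from rfl]
    simp [tracePoly, beta, Nat.odd_iff]
    ring
  | (n + 3), _ => by
    have ih := stmt15_aux (n + 1) (by omega)
    rw [← Finset.Ico_add_one_right_eq_Icc, Finset.sum_Ico_eq_sum_range] at ih ⊢
    simp only [show n + 3 + 1 - 1 = n + 3 from rfl, show n + 1 + 1 - 1 = n + 1 from rfl] at ih ⊢
    rw [Finset.sum_range_succ', Finset.sum_range_succ']
    have hcong : ∀ i ∈ Finset.range (n + 1),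
        (-1 : Polynomial ℂ) ^ (1 + (i + 1 + 1)) * beta (1 + (i + 1 + 1)) *
          tracePoly (n + 3 - (1 + (i + 1 + 1)))
        = (-1 : Polynomial ℂ) ^ (1 + i) * beta (1 + i) * tracePoly (n + 1 - (1 + i)) := by
      intro i _
      have h1 : (1 + (i + 1 + 1)) = (1 + i) + 2 := by omega
      have h2 : n + 3 - (1 + i + 2) = n + 1 - (1 + i) := by omega
      have h3 : beta ((1 + i) + 2) = beta (1 + i) := by
        simp [beta, Nat.odd_iff, Nat.add_mod]
      rw [h1, h2, h3, pow_add]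
      ring
    rw [Finset.sum_congr rfl hcong]
    have hb1 : beta (1 + 0) = X := by simp [beta]
    have hb2 : beta (1 + (0 + 1)) = 2 := by simp [beta, Nat.odd_iff]
    rw [hb1, hb2]
    simp only [show n + 3 - (1 + 0) = n + 2 from by omega,
      show n + 3 - (1 + (0 + 1)) = n + 1 from by omega, tracePoly]
    linear_combination ih

theorem stmt15 (s : ℕ) (hs : 1 ≤ s) :
    tracePoly s +
      ∑ i ∈ Finset.Icc 1 s, (-1 : Polynomial ℂ) ^ i * beta i * tracePoly (s - i) = 0 := by
  exact stmt15_aux s hs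
end
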